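/- arXiv:1512.08142 — 6 statements merged into one kernel-verified Lean document; each statement's English description precedes it below -/
import Mathlib

section
/- Let c > 0 be a constant, w ∈ ℝ, and let a : ℝ → ℝ be differentiable with a(t) > 0 for all t. Define v(t) = w / √(a(t)² + w²/c²). Then for every t one has |v(t)| < c, and v is a spatially homogeneous solution of the relativistic Burgers equation on a FLRW background, i.e. a(t) v'(t) + v(t)(1 − v(t)²/c²) a'(t) = 0 for all t. -/
/-- For `c > 0`, `w ∈ ℝ` and differentiable positive `a`, the function
`v(t) = w / √(a(t)² + w²/c²)` satisfies `|v(t)| < c` and is a spatially homogeneous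
solution of the relativistic Burgers equation on a FLRW background:
`a(t) v'(t) + v(t)(1 − v(t)²/c²) a'(t) = 0`. -/
theorem spatially_homogeneous_solution_FLRW
    (c w : ℝ) (hc : 0 < c)
    (a : ℝ → ℝ) (ha : Differentiable ℝ a) (hapos : ∀ t, 0 < a t)
    (v : ℝ → ℝ)
    (hv : ∀ t, v t = w / Real.sqrt ((a t) ^ 2 + w ^ 2 / c ^ 2)) :
    ∀ t, |v t| < c ∧
      a t * deriv v t + v t * (1 - (v t) ^ 2 / c ^ 2) * deriv a t = 0 := by
  have hveq : v = fun t => w / Real.sqrt ((a t) ^ 2 + w ^ 2 / c ^ 2) := funext hv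
  intro t
  set D : ℝ := (a t) ^ 2 + w ^ 2 / c ^ 2 with hDdef
  have hat : 0 < a t := hapos t
  have hD : 0 < D := by positivity
  have hsD : 0 < Real.sqrt D := Real.sqrt_pos.mpr hD
  have hsq : Real.sqrt D ^ 2 = D := Real.sq_sqrt hD.le
  -- bound |v t| < c
  have hbound : |v t| < c := by
    rw [hv t, ← hDdef]
    rw [abs_div, abs_of_pos hsD]
    rw [div_lt_iff₀ hsD]
    have hcD : c^2 * D = c^2 * (a t)^2 + w^2 := by
      rw [hDdef]; field_simp
    nlinarith [abs_nonneg w, sq_abs w, mul_pos hc hsD, hsq, mul_pos (mul_pos hc hc) (mul_pos hat hat)]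
  refine ⟨hbound, ?_⟩
  -- derivative
  have haD : HasDerivAt a (deriv a t) t := (ha t).hasDerivAt
  have hinner : HasDerivAt (fun s => (a s) ^ 2 + w ^ 2 / c ^ 2)
      (2 * a t * deriv a t) t := by
    have := (haD.pow 2).add_const (w ^ 2 / c ^ 2)
    simpa [mul_comm, mul_assoc, mul_left_comm] using this
  have hsqrt : HasDerivAt (fun s => Real.sqrt ((a s) ^ 2 + w ^ 2 / c ^ 2))
      ((2 * a t * deriv a t) / (2 * Real.sqrt D)) t := hinner.sqrt hD.ne'
  have hvd : HasDerivAt v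
      ((0 * Real.sqrt D - w * ((2 * a t * deriv a t) / (2 * Real.sqrt D))) /
        (Real.sqrt D) ^ 2) t := by
    rw [hveq]
    exact (hasDerivAt_const t w).div hsqrt hsD.ne'
  have hderiv : deriv v t =
      (0 * Real.sqrt D - w * ((2 * a t * deriv a t) / (2 * Real.sqrt D))) /
        (Real.sqrt D) ^ 2 := hvd.deriv
  rw [hderiv, hv t, ← hDdef]
  have hc2 : (c : ℝ) ^ 2 ≠ 0 := by positivity
  have hcD : c^2 * D = c^2 * (a t)^2 + w^2 := by
    rw [hDdef]; field_simp
  field_simp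
  ring_nf
  have hinv : (c⁻¹ : ℝ) ^ 2 = 1 / c ^ 2 := by field_simp
  rw [hsq]
  linear_combination (w * deriv a t) * hcD
end

section
/- Let c > 0, let I ⊆ ℝ be an interval, let a : ℝ → ℝ be differentiable with a(t) > 0, and let v : ℝ → ℝ be differentiable with |v(t)| < c for all t ∈ I. If a(t) v'(t) + v(t)(1 − v(t)²/c²) a'(t) = 0 for all t ∈ I, then the quantity w(t) := a(t) v(t) / √(1 − v(t)²/c²) is constant on I, i.e. its derivative vanishes on I and w(t₁) = w(t₂) for all t₁, t₂ ∈ I. -/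
/-- Along any spatially homogeneous solution `v` (with `|v| < c` on an
interval `I`) of `a v' + v(1 − v²/c²) a' = 0`, the quantity
`w(t) = a(t) v(t) / √(1 − v(t)²/c²)` is constant on `I`: its derivative vanishes on
`I` and it takes the same value at any two points of `I`. -/
theorem invariant_w_of_spatially_homogeneous
    (c : ℝ) (hc : 0 < c)
    (I : Set ℝ) (hI : I.OrdConnected)
    (a : ℝ → ℝ) (ha : Differentiable ℝ a) (hapos : ∀ t, 0 < a t)
    (v : ℝ → ℝ) (hv : Differentiable ℝ v)
    (hvc : ∀ t ∈ I, |v t| < c)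
    (hode : ∀ t ∈ I,
      a t * deriv v t + v t * (1 - (v t) ^ 2 / c ^ 2) * deriv a t = 0) :
    (∀ t ∈ I, HasDerivWithinAt
        (fun s => a s * v s / Real.sqrt (1 - (v s) ^ 2 / c ^ 2)) 0 I t) ∧
      ∀ t₁ ∈ I, ∀ t₂ ∈ I,
        a t₁ * v t₁ / Real.sqrt (1 - (v t₁) ^ 2 / c ^ 2)
          = a t₂ * v t₂ / Real.sqrt (1 - (v t₂) ^ 2 / c ^ 2) := by
  have hderiv : ∀ t ∈ I, HasDerivWithinAt
      (fun s => a s * v s / Real.sqrt (1 - (v s) ^ 2 / c ^ 2)) 0 I t := by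
    intro t ht
    have hgt : 0 < 1 - (v t) ^ 2 / c ^ 2 := by
      have h1 : (v t) ^ 2 < c ^ 2 := by
        have := hvc t ht
        nlinarith [abs_nonneg (v t), sq_abs (v t), abs_lt.mp this]
      have hc2 : (0:ℝ) < c ^ 2 := by positivity
      rw [sub_pos, div_lt_one hc2]; exact h1
    have hs0 : 0 < Real.sqrt (1 - (v t) ^ 2 / c ^ 2) := Real.sqrt_pos.mpr hgt
    have hsq : Real.sqrt (1 - (v t) ^ 2 / c ^ 2) ^ 2 = 1 - (v t) ^ 2 / c ^ 2 :=
      Real.sq_sqrt hgt.le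
    have hg : HasDerivAt (fun s => 1 - (v s) ^ 2 / c ^ 2)
        (0 - (2 * v t ^ 1 * deriv v t) / c ^ 2) t := by
      exact (hasDerivAt_const t (1:ℝ)).sub (((hv t).hasDerivAt.pow 2).div_const (c ^ 2))
    have hsqrt : HasDerivAt (fun s => Real.sqrt (1 - (v s) ^ 2 / c ^ 2))
        ((0 - (2 * v t ^ 1 * deriv v t) / c ^ 2) / (2 * Real.sqrt (1 - (v t) ^ 2 / c ^ 2))) t := by
      have : HasDerivAt (fun s => Real.sqrt (1 - (v s) ^ 2 / c ^ 2))
          (1 / (2 * Real.sqrt (1 - (v t) ^ 2 / c ^ 2)) * (0 - (2 * v t ^ 1 * deriv v t) / c ^ 2)) t :=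
        (Real.hasDerivAt_sqrt hgt.ne').comp t hg
      convert this using 1; ring
    have hmul : HasDerivAt (fun s => a s * v s)
        (deriv a t * v t + a t * deriv v t) t := (ha t).hasDerivAt.mul (hv t).hasDerivAt
    have hdiv := hmul.div hsqrt hs0.ne'
    have hnum : (deriv a t * v t + a t * deriv v t) * Real.sqrt (1 - (v t) ^ 2 / c ^ 2)
        - a t * v t * ((0 - (2 * v t ^ 1 * deriv v t) / c ^ 2) /
          (2 * Real.sqrt (1 - (v t) ^ 2 / c ^ 2))) = 0 := by
      rw [sub_eq_zero, ← mul_div_assoc, eq_div_iff (by positivity : (2 * Real.sqrt (1 - (v t) ^ 2 / c ^ 2)) ≠ 0)]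
      have h2 : (deriv a t * v t + a t * deriv v t) * Real.sqrt (1 - (v t) ^ 2 / c ^ 2) *
          (2 * Real.sqrt (1 - (v t) ^ 2 / c ^ 2))
          = 2 * (deriv a t * v t + a t * deriv v t) * (Real.sqrt (1 - (v t) ^ 2 / c ^ 2)) ^ 2 := by
        ring
      rw [h2, hsq]
      have hode' := hode t ht
      have hc0 : (c:ℝ) ≠ 0 := hc.ne'
      field_simp at hode' ⊢
      linear_combination 2 * hode'
    have hzero : ((deriv a t * v t + a t * deriv v t) * Real.sqrt (1 - (v t) ^ 2 / c ^ 2)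
        - a t * v t * ((0 - (2 * v t ^ 1 * deriv v t) / c ^ 2) /
          (2 * Real.sqrt (1 - (v t) ^ 2 / c ^ 2))))
        / Real.sqrt (1 - (v t) ^ 2 / c ^ 2) ^ 2 = 0 := by
      rw [hnum, zero_div]
    rw [hzero] at hdiv
    exact hdiv.hasDerivWithinAt
  refine ⟨hderiv, fun t₁ h₁ t₂ h₂ => ?_⟩
  have hconv : Convex ℝ I := hI.convex
  have := hconv.norm_image_sub_le_of_norm_hasDerivWithin_le
    (f' := fun _ => (0:ℝ)) (C := 0) (fun x hx => hderiv x hx)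
    (fun x hx => by simp) h₁ h₂
  simp only [zero_mul, Real.norm_eq_abs] at this
  have := abs_nonpos_iff.mp this
  linarith [this]
end

section
/- Let c > 0, let I ⊆ ℝ be an interval containing t₀, let a : ℝ → ℝ be differentiable with a(t) > 0, and let v : ℝ → ℝ be differentiable with |v(t)| < c for all t ∈ I and satisfying a(t) v'(t) + v(t)(1 − v(t)²/c²) a'(t) = 0 on I. Then, setting w = a(t₀) v(t₀) / √(1 − v(t₀)²/c²), one has v(t) = w / √(a(t)² + w²/c²) for all t ∈ I. In particular every spatially homogeneous solution with values in (−c, c) is of this explicit form, parametrized by the real parameter w. -/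
/-- Every spatially homogeneous solution `v` with values in `(−c, c)` of
`a v' + v(1 − v²/c²) a' = 0` on an interval `I ∋ t₀` has the explicit form
`v(t) = w / √(a(t)² + w²/c²)`, with `w = a(t₀) v(t₀) / √(1 − v(t₀)²/c²)`. -/
theorem spatially_homogeneous_solutions_explicit_form
    (c : ℝ) (hc : 0 < c)
    (I : Set ℝ) (hI : I.OrdConnected) (t₀ : ℝ) (ht₀ : t₀ ∈ I)
    (a : ℝ → ℝ) (ha : Differentiable ℝ a) (hapos : ∀ t, 0 < a t)
    (v : ℝ → ℝ) (hv : Differentiable ℝ v)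
    (hvc : ∀ t ∈ I, |v t| < c)
    (hode : ∀ t ∈ I,
      a t * deriv v t + v t * (1 - (v t) ^ 2 / c ^ 2) * deriv a t = 0) :
    ∀ t ∈ I,
      v t = (a t₀ * v t₀ / Real.sqrt (1 - (v t₀) ^ 2 / c ^ 2))
        / Real.sqrt ((a t) ^ 2
            + (a t₀ * v t₀ / Real.sqrt (1 - (v t₀) ^ 2 / c ^ 2)) ^ 2 / c ^ 2) := by
  set s : ℝ → ℝ := fun t => Real.sqrt (1 - (v t) ^ 2 / c ^ 2) with hs_def
  set F : ℝ → ℝ := fun t => a t * v t / s t with hF_def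
  -- positivity of 1 - v²/c² on I
  have hq : ∀ t ∈ I, 0 < 1 - (v t) ^ 2 / c ^ 2 := by
    intro t ht
    have h1 := hvc t ht
    have h2 : (v t) ^ 2 < c ^ 2 := by
      have := abs_lt.mp h1
      nlinarith [this.1, this.2]
    have : (v t) ^ 2 / c ^ 2 < 1 := (div_lt_one (by positivity)).mpr h2
    linarith
  have hspos : ∀ t ∈ I, 0 < s t := fun t ht => Real.sqrt_pos.mpr (hq t ht)
  have hssq : ∀ t ∈ I, (s t) ^ 2 = 1 - (v t) ^ 2 / c ^ 2 := fun t ht =>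
    Real.sq_sqrt (hq t ht).le
  -- F has zero derivative within I at each point of I
  have hF' : ∀ t ∈ I, HasDerivWithinAt F 0 I t := by
    intro t ht
    have hv' : HasDerivAt v (deriv v t) t := (hv t).hasDerivAt
    have ha' : HasDerivAt a (deriv a t) t := (ha t).hasDerivAt
    have hqd : HasDerivAt (fun u => 1 - (v u) ^ 2 / c ^ 2)
        (-((2 * v t ^ 1 * deriv v t) / c ^ 2)) t := by
      simpa using (((hv'.pow 2).div_const (c ^ 2)).const_sub 1)
    have hsd : HasDerivAt s
        (-((2 * v t ^ 1 * deriv v t) / c ^ 2) / (2 * s t)) t :=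
      hqd.sqrt (by have := hq t ht; linarith)
    have hFd : HasDerivAt F
        (((deriv a t * v t + a t * deriv v t) * s t
          - a t * v t * (-((2 * v t ^ 1 * deriv v t) / c ^ 2) / (2 * s t)))
          / (s t) ^ 2) t :=
      (ha'.mul hv').div hsd (hspos t ht).ne'
    have hzero : ((deriv a t * v t + a t * deriv v t) * s t
          - a t * v t * (-((2 * v t ^ 1 * deriv v t) / c ^ 2) / (2 * s t)))
          / (s t) ^ 2 = 0 := by
      have hst := hspos t ht
      have hsq := hssq t ht
      have hP := hode t ht
      have hnum : ((deriv a t * v t + a t * deriv v t) * s t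
          - a t * v t * (-((2 * v t ^ 1 * deriv v t) / c ^ 2) / (2 * s t))) = 0 := by
        have hc0 : (c : ℝ) ≠ 0 := hc.ne'
        have hs0 : s t ≠ 0 := hst.ne'
        field_simp
        have hcc : c ^ 2 * c⁻¹ ^ 2 = 1 := by field_simp
        linear_combination (c^2*(deriv a t * v t + a t * deriv v t)) * hsq + c^2 * hP
          + (-(v t ^ 2 * a t * deriv v t)) * hcc
      rw [hnum, zero_div]
    rw [hzero] at hFd
    exact hFd.hasDerivWithinAt
  -- F is constant on I
  have hconst : ∀ t ∈ I, F t = F t₀ := by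
    intro t ht
    have := Convex.norm_image_sub_le_of_norm_hasDerivWithin_le
      (f := F) (f' := fun _ => (0 : ℝ)) (C := 0) (s := I)
      hF' (fun x _ => by simp) hI.convex ht₀ ht
    have h0 : ‖F t - F t₀‖ ≤ 0 := by simpa using this
    have := norm_nonneg (F t - F t₀)
    have : ‖F t - F t₀‖ = 0 := le_antisymm h0 this
    have := norm_eq_zero.mp this
    linarith [sub_eq_zero.mp this]
  -- final algebra
  intro t ht
  have hst := hspos t ht
  have hat := hapos t
  have hsq := hssq t ht
  have hFt : a t * v t / s t = a t₀ * v t₀ / s t₀ := hconst t ht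
  set w : ℝ := a t₀ * v t₀ / s t₀ with hw
  have hvt : v t = w * s t / a t := by
    rw [← hFt]; field_simp
  have hwsq : (a t) ^ 2 + w ^ 2 / c ^ 2 = (a t / s t) ^ 2 := by
    have hw2 : w ^ 2 = (a t * v t / s t) ^ 2 := by rw [hFt]
    rw [hw2]
    have hs0 : s t ≠ 0 := hst.ne'
    have hc0 : (c : ℝ) ≠ 0 := hc.ne'
    field_simp
    have hcc : c ^ 2 * c⁻¹ ^ 2 = 1 := by field_simp
    linear_combination c ^ 2 * hsq + (-(v t ^ 2)) * hcc
  rw [hwsq, Real.sqrt_sq (by positivity : (0:ℝ) ≤ a t / s t)]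
  rw [hvt]
  field_simp
end

section
/- Let c > 0, k ∈ ℝ, and let a : ℝ → ℝ be differentiable with a(t) > 0, such that there exist t₁, t₂ with a'(t₁) ≠ a'(t₂). Let J ⊆ ℝ be an interval on which 1 − k r² > 0, and let v : J → ℝ be differentiable with |v(r)| < c for all r ∈ J. If the static (time-independent) function v satisfies the relativistic Burgers equation on a FLRW background, i.e. (1 − k r²)^{1/2} (d/dr)(v(r)²/2) + v(r)(1 − v(r)²/c²) a'(t) = 0 for all t ∈ ℝ and all r ∈ J, then v ≡ 0 on J. In other words, the equation admits no static solution other than v ≡ 0. -/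
/-- If the scale factor `a` has non-constant derivative, then the only
static (time-independent) solution `v = v(r)` of the relativistic Burgers equation
on a FLRW background, `(1 − k r²)^{1/2} (v²/2)' + v (1 − v²/c²) a'(t) = 0` for all
`t` and all `r` in an interval `J` on which `1 − k r² > 0`, with `|v| < c`,
is `v ≡ 0`. -/
theorem no_nontrivial_static_solution_FLRW
    (c k : ℝ) (hc : 0 < c)
    (a : ℝ → ℝ) (ha : Differentiable ℝ a) (hapos : ∀ t, 0 < a t)
    (hnc : ∃ t₁ t₂ : ℝ, deriv a t₁ ≠ deriv a t₂)
    (J : Set ℝ) (hJ : J.OrdConnected) (hkr : ∀ r ∈ J, 0 < 1 - k * r ^ 2)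
    (v : ℝ → ℝ) (hv : DifferentiableOn ℝ v J)
    (hvc : ∀ r ∈ J, |v r| < c)
    (heq : ∀ t : ℝ, ∀ r ∈ J,
      Real.sqrt (1 - k * r ^ 2) * derivWithin (fun y => (v y) ^ 2 / 2) J r
        + v r * (1 - (v r) ^ 2 / c ^ 2) * deriv a t = 0) :
    ∀ r ∈ J, v r = 0 := by
  intro r hr
  obtain ⟨t₁, t₂, ht⟩ := hnc
  have h1 := heq t₁ r hr
  have h2 := heq t₂ r hr
  have hsub : v r * (1 - (v r) ^ 2 / c ^ 2) * (deriv a t₁ - deriv a t₂) = 0 := by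
    have := sub_eq_zero.mpr (h1.trans h2.symm)
    linarith [this]
  have hdne : deriv a t₁ - deriv a t₂ ≠ 0 := sub_ne_zero.mpr ht
  have hfac : v r * (1 - (v r) ^ 2 / c ^ 2) = 0 :=
    (mul_eq_zero.mp hsub).resolve_right hdne
  have hv2 : (v r) ^ 2 < c ^ 2 := by
    have := hvc r hr
    nlinarith [abs_nonneg (v r), sq_abs (v r)]
  have hpos : 0 < 1 - (v r) ^ 2 / c ^ 2 := by
    have hc2 : (0:ℝ) < c ^ 2 := by positivity
    rw [sub_pos, div_lt_one hc2]; exact hv2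
  rcases mul_eq_zero.mp hfac with h | h
  · exact h
  · linarith
end

section
/- Let c > 0, k ∈ ℝ, let a : ℝ → ℝ be differentiable with a(t) > 0, let J ⊆ ℝ be an interval with 1 − k r² > 0 on J, and let v : ℝ × J → ℝ be differentiable in (t,r). Then v satisfies the relativistic Burgers equation on a FLRW background, a(t) ∂_t v + (1 − k r²)^{1/2} ∂_r(v²/2) + v(1 − v²/c²) a'(t) = 0, at a point (t,r) if and only if it satisfies the balance-law form ∂_t( a(t) v / (1 − k r²)^{1/2} ) − (v³/c²) ∂_t( a(t) / (1 − k r²)^{1/2} ) + ∂_r(v²/2) = 0 at that point. -/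
/-- For differentiable `v = v(t,r)` on `ℝ × J` (with `1 − k r² > 0` on
the interval `J`), the relativistic Burgers equation on a FLRW background
`a ∂_t v + (1 − k r²)^{1/2} ∂_r(v²/2) + v(1 − v²/c²) a' = 0` holds at a point
`(t,r)` if and only if the balance-law form
`∂_t(a v/(1 − k r²)^{1/2}) − (v³/c²) ∂_t(a/(1 − k r²)^{1/2}) + ∂_r(v²/2) = 0`
holds at that point. -/
theorem FLRW_burgers_balance_law_form
    (c k : ℝ) (hc : 0 < c)
    (a : ℝ → ℝ) (ha : Differentiable ℝ a) (hapos : ∀ t, 0 < a t)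
    (J : Set ℝ) (hJ : J.OrdConnected) (hkr : ∀ r ∈ J, 0 < 1 - k * r ^ 2)
    (v : ℝ → ℝ → ℝ) (hv : Differentiable ℝ (fun p : ℝ × ℝ => v p.1 p.2)) :
    ∀ t : ℝ, ∀ r ∈ J,
      (a t * deriv (fun s => v s r) t
          + Real.sqrt (1 - k * r ^ 2) * deriv (fun y => (v t y) ^ 2 / 2) r
          + v t r * (1 - (v t r) ^ 2 / c ^ 2) * deriv a t = 0
        ↔
        deriv (fun s => a s * v s r / Real.sqrt (1 - k * r ^ 2)) t
          - ((v t r) ^ 3 / c ^ 2) * deriv (fun s => a s / Real.sqrt (1 - k * r ^ 2)) t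
          + deriv (fun y => (v t y) ^ 2 / 2) r = 0) := by
  intro t r hr
  set Q : ℝ := Real.sqrt (1 - k * r ^ 2) with hQdef
  have hQpos : 0 < Q := Real.sqrt_pos.mpr (hkr r hr)
  have hvd : Differentiable ℝ (fun s => v s r) :=
    by have h := hv.comp (Differentiable.prodMk differentiable_id (differentiable_const r)); exact h
  have h1 : deriv (fun s => a s * v s r / Q) t
      = (deriv a t * v t r + a t * deriv (fun s => v s r) t) / Q := by
    rw [deriv_div_const, deriv_fun_mul (ha t) (hvd t)]
  have h2 : deriv (fun s => a s / Q) t = deriv a t / Q := by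
    rw [deriv_div_const]
  rw [h1, h2]
  set A := deriv a t
  set V := v t r
  set Vt := deriv (fun s => v s r) t
  set D := deriv (fun y => (v t y) ^ 2 / 2) r
  have hc2 : (c : ℝ) ^ 2 ≠ 0 := pow_ne_zero 2 hc.ne'
  have hQ : Q ≠ 0 := hQpos.ne'
  have key : a t * Vt + Q * D + V * (1 - V ^ 2 / c ^ 2) * A
      = Q * ((A * V + a t * Vt) / Q - V ^ 3 / c ^ 2 * (A / Q) + D) := by
    field_simp
    ring
  constructor
  · intro h
    have h0 : Q * ((A * V + a t * Vt) / Q - V ^ 3 / c ^ 2 * (A / Q) + D) = 0 :=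
      key.symm.trans h
    exact (mul_eq_zero.mp h0).resolve_left hQ
  · intro h
    rw [key, h, mul_zero]
end

section
/- Let c > 0, k ∈ ℝ, let a : ℝ → ℝ be differentiable with a(t) > 0, let J ⊆ ℝ be an interval with 1 − k r² > 0 on J, and let v : ℝ × J → ℝ be differentiable in (t,r). Then v satisfies a(t)² ∂_t( (v/a(t)) (1 − k r²)^{1/2} ) + ∂_r( (v²/2)(1 − k r²) ) + v (1 − k r²)^{1/2} a'(t) (2 − v²/c²) + r k v² = 0 at a point (t,r) if and only if it satisfies the relativistic Burgers equation on a FLRW background a(t) ∂_t v + (1 − k r²)^{1/2} ∂_r(v²/2) + v(1 − v²/c²) a'(t) = 0 at that point. -/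
/-- For differentiable `v = v(t,r)` on `ℝ × J` (with `1 − k r² > 0` on
the interval `J`), the intermediate balance-law form
`a² ∂_t((v/a)(1 − k r²)^{1/2}) + ∂_r((v²/2)(1 − k r²)) + v (1 − k r²)^{1/2} a' (2 − v²/c²) + r k v² = 0`
holds at a point `(t,r)` if and only if the relativistic Burgers equation on a FLRW
background `a ∂_t v + (1 − k r²)^{1/2} ∂_r(v²/2) + v(1 − v²/c²) a' = 0` holds at
that point. -/
theorem FLRW_burgers_intermediate_form_equivalence
    (c k : ℝ) (hc : 0 < c)
    (a : ℝ → ℝ) (ha : Differentiable ℝ a) (hapos : ∀ t, 0 < a t)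
    (J : Set ℝ) (hJ : J.OrdConnected) (hkr : ∀ r ∈ J, 0 < 1 - k * r ^ 2)
    (v : ℝ → ℝ → ℝ) (hv : Differentiable ℝ (fun p : ℝ × ℝ => v p.1 p.2)) :
    ∀ t : ℝ, ∀ r ∈ J,
      ((a t) ^ 2 * deriv (fun s => (v s r / a s) * Real.sqrt (1 - k * r ^ 2)) t
          + deriv (fun y => ((v t y) ^ 2 / 2) * (1 - k * y ^ 2)) r
          + v t r * Real.sqrt (1 - k * r ^ 2) * deriv a t * (2 - (v t r) ^ 2 / c ^ 2)
          + r * k * (v t r) ^ 2 = 0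
        ↔
        a t * deriv (fun s => v s r) t
          + Real.sqrt (1 - k * r ^ 2) * deriv (fun y => (v t y) ^ 2 / 2) r
          + v t r * (1 - (v t r) ^ 2 / c ^ 2) * deriv a t = 0) := by
  intro t r hr
  have h2 : 0 < 1 - k * r ^ 2 := hkr r hr
  have hs : 0 < Real.sqrt (1 - k * r ^ 2) := Real.sqrt_pos.mpr h2
  have hssq : Real.sqrt (1 - k * r ^ 2) ^ 2 = 1 - k * r ^ 2 := Real.sq_sqrt h2.le
  have ha0 : a t ≠ 0 := (hapos t).ne'
  have hvt : DifferentiableAt ℝ (fun u => v u r) t :=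
    by have h1 : DifferentiableAt ℝ (fun u : ℝ => (u, r)) t := differentiableAt_id.prodMk (differentiableAt_const r); exact (hv (t, r)).comp t h1
  have hvr : DifferentiableAt ℝ (fun y => v t y) r :=
    by have := (hv (t, r)).comp r ((differentiableAt_const t).prodMk differentiableAt_id); exact this
  have hD1 : deriv (fun u => (v u r / a u) * Real.sqrt (1 - k * r ^ 2)) t
      = (deriv (fun u => v u r) t * a t - v t r * deriv a t) / (a t) ^ 2
        * Real.sqrt (1 - k * r ^ 2) := by
    rw [deriv_mul_const (c := fun u => v u r / a u) (hvt.div (ha t) ha0), deriv_fun_div hvt (ha t) ha0]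
  have hq : HasDerivAt (fun y : ℝ => 1 - k * y ^ 2) (-(k * (2 * r ^ 1))) r := by
    simpa using ((hasDerivAt_pow 2 r).const_mul k).const_sub 1
  have hvr2 : DifferentiableAt ℝ (fun y => (v t y) ^ 2 / 2) r := (hvr.pow 2).div_const 2
  have hD2 : deriv (fun y => ((v t y) ^ 2 / 2) * (1 - k * y ^ 2)) r
      = deriv (fun y => (v t y) ^ 2 / 2) r * (1 - k * r ^ 2)
        + ((v t r) ^ 2 / 2) * (-(k * (2 * r ^ 1))) := (hvr2.hasDerivAt.mul hq).deriv
  rw [hD1, hD2]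
  have key : (a t) ^ 2 * ((deriv (fun u => v u r) t * a t - v t r * deriv a t) / (a t) ^ 2
        * Real.sqrt (1 - k * r ^ 2))
      + (deriv (fun y => (v t y) ^ 2 / 2) r * (1 - k * r ^ 2)
        + ((v t r) ^ 2 / 2) * (-(k * (2 * r ^ 1))))
      + v t r * Real.sqrt (1 - k * r ^ 2) * deriv a t * (2 - (v t r) ^ 2 / c ^ 2)
      + r * k * (v t r) ^ 2
      = Real.sqrt (1 - k * r ^ 2) *
        (a t * deriv (fun s => v s r) t
          + Real.sqrt (1 - k * r ^ 2) * deriv (fun y => (v t y) ^ 2 / 2) r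
          + v t r * (1 - (v t r) ^ 2 / c ^ 2) * deriv a t) := by
    field_simp
    linear_combination (-(deriv (fun y => (v t y) ^ 2 / 2) r * c ^ 2)) * hssq
  rw [key, mul_eq_zero]
  constructor
  · rintro (h | h)
    · exact absurd h hs.ne'
    · exact h
  · exact Or.inr
end
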